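/- Let N ≥ 2 and let x be an element of the nilradical of a seaweed subalgebra s of gl(N,ℂ). Then the diagonal part x_d of x (obtained by zeroing all off-diagonal entries) also lies in the nilradical of s, and x_d lies in the center Z(s). -/

import Mathlib

noncomputable section

attribute [local instance 100] LieRing.ofAssociativeRing

/-- The elementary matrix `E_{p,q}` in `gl(N,ℂ)`. -/
def Emat (N : ℕ) (p q : Fin N) : Matrix (Fin N) (Fin N) ℂ := Matrix.single p q 1

/-- The set of partial sums `PS(c) = {c₁+⋯+c_j : 1 ≤ j ≤ r}` of a composition `c`. -/
def PS (c : List ℕ) : Set ℕ := {k | ∃ j, 1 ≤ j ∧ j ≤ c.length ∧ k = (c.take j).sum}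

/-- Positions `i` and `j` (0-indexed members of `[N]`) lie in a common consecutive block of the
composition `c`: no partial sum of `c` separates them. -/
def sameBlock (c : List ℕ) (i j : ℕ) : Prop :=
  ∀ k ∈ PS c, ¬ (min i j < k ∧ k ≤ max i j)

/-- The spanning set of the seaweed algebra `p(a₁|⋯|a_n / b₁|⋯|b_m)`: all diagonal `E_{j,j}`,
all `E_{p,q}` with `p > q` in a common block of `a`, and all `E_{p,q}` with `p < q` in a common
block of `b`. -/
def seaweedSet (a b : List ℕ) (N : ℕ) : Set (Matrix (Fin N) (Fin N) ℂ) :=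
  {M | ∃ j, M = Emat N j j} ∪
  {M | ∃ p q : Fin N, (q : ℕ) < p ∧ sameBlock a (p : ℕ) (q : ℕ) ∧ M = Emat N p q} ∪
  {M | ∃ p q : Fin N, (p : ℕ) < q ∧ sameBlock b (p : ℕ) (q : ℕ) ∧ M = Emat N p q}

/-- The seaweed subalgebra `p(a / b)` of `gl(N,ℂ)`, spanned by `seaweedSet a b N`
(this set is closed under brackets, so the Lie span coincides with the linear span). -/
def seaweed (a b : List ℕ) (N : ℕ) : LieSubalgebra ℂ (Matrix (Fin N) (Fin N) ℂ) :=
  LieSubalgebra.lieSpan ℂ _ (seaweedSet a b N)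

/-- The span of all brackets `⁅x,y⁆` with `x ∈ A`, `y ∈ B`. -/
def bracketSpan {L : Type*} [LieRing L] [LieAlgebra ℂ L] (A B : Submodule ℂ L) :
    Submodule ℂ L :=
  Submodule.span ℂ {m | ∃ x ∈ A, ∃ y ∈ B, m = ⁅x, y⁆}

/-- The lower central series of a subspace `A`: `A₀ = A`, `A_{k+1} = ⁅A, A_k⁆`. -/
def lcsS {L : Type*} [LieRing L] [LieAlgebra ℂ L] (A : Submodule ℂ L) : ℕ → Submodule ℂ L
  | 0 => A
  | k + 1 => bracketSpan A (lcsS A k)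

/-- The nilradical of a Lie subalgebra `s`: the largest nilpotent ideal of `s`, realized as the
supremum of all nilpotent ideals of `s`. -/
def nilrad {L : Type*} [LieRing L] [LieAlgebra ℂ L] (s : LieSubalgebra ℂ L) : Submodule ℂ L :=
  sSup {I : Submodule ℂ L |
    I ≤ s.toSubmodule ∧ (∀ x ∈ s, ∀ y ∈ I, ⁅x, y⁆ ∈ I) ∧ ∃ k, lcsS I k = ⊥}

/-- The center `Z(s) = {x ∈ s : ⁅x,y⁆ = 0 for all y ∈ s}` of a Lie subalgebra, as a subspace of
the ambient Lie algebra. -/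
def centerSub {L : Type*} [LieRing L] [LieAlgebra ℂ L] (s : LieSubalgebra ℂ L) :
    Submodule ℂ L where
  carrier := {x | x ∈ s ∧ ∀ y ∈ s, ⁅x, y⁆ = 0}
  add_mem' := by
    rintro a b ⟨ha, ha2⟩ ⟨hb, hb2⟩
    exact ⟨add_mem ha hb, fun y hy => by rw [add_lie, ha2 y hy, hb2 y hy, add_zero]⟩
  zero_mem' := ⟨zero_mem _, fun y _ => by rw [zero_lie]⟩
  smul_mem' := by
    rintro c x ⟨hx, hx2⟩
    exact ⟨s.smul_mem c hx, fun y hy => by rw [smul_lie, hx2 y hy, smul_zero]⟩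

/-!
Since `s` contains every `E_{p,p}` and `x_d = x - ½ ∑ₚ ⁅E_{p,p}, ⁅E_{p,p}, x⁆⁆`, the diagonal part
of `x` lies in every ideal of `s` containing `x`. If `x_{p,p} ≠ x_{q,q}` for some root vector
`E_{p,q} ∈ s`, then `⁅x_d, E_{p,q}⁆ = (x_{p,p} - x_{q,q}) E_{p,q}` puts `E_{p,q}` into a nilpotent
ideal on which `ad x_d` has the nonzero eigenvalue `x_{p,p} - x_{q,q}`, which is impossible. So
`x_d` is constant along the roots of `s`, hence commutes with the generators of `s` and is central;
a central element spans an abelian ideal, so it lies in the nilradical.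
-/

section LieAlgebra

variable {L : Type*} [LieRing L] [LieAlgebra ℂ L]

lemma lie_mem_lcsS_succ {A : Submodule ℂ L} {d y : L} {n : ℕ} (hd : d ∈ A)
    (hy : y ∈ lcsS A n) : ⁅d, y⁆ ∈ lcsS A (n + 1) :=
  Submodule.subset_span ⟨d, hd, y, hy, rfl⟩

lemma eq_zero_of_lie_eq_smul_of_lcsS_eq_bot {A : Submodule ℂ L} {d e : L} {c : ℂ} {k : ℕ}
    (hd : d ∈ A) (he : e ∈ A) (hde : ⁅d, e⁆ = c • e) (hk : lcsS A k = ⊥) (hc : c ≠ 0) :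
    e = 0 := by
  have hpow : ∀ n, c ^ n • e ∈ lcsS A n := by
    intro n
    induction n with
    | zero => simpa [lcsS] using he
    | succ n ih =>
      have := lie_mem_lcsS_succ hd ih
      rwa [lie_smul, hde, smul_smul, ← pow_succ] at this
  have hzero := hpow k
  rw [hk, Submodule.mem_bot, smul_eq_zero] at hzero
  exact hzero.resolve_left (pow_ne_zero k hc)

lemma mem_nilrad_of_mem_centerSub {s : LieSubalgebra ℂ L} {x : L} (hx : x ∈ centerSub s) :
    x ∈ nilrad s := by
  obtain ⟨hxs, hxc⟩ := hx
  have hspan : Submodule.span ℂ {x} ≤ s.toSubmodule := by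
    rwa [Submodule.span_le, Set.singleton_subset_iff]
  have hlie : ∀ y ∈ s, ∀ z ∈ Submodule.span ℂ {x}, ⁅y, z⁆ = 0 := by
    intro y hy z hz
    obtain ⟨r, rfl⟩ := Submodule.mem_span_singleton.mp hz
    rw [lie_smul, ← lie_skew, hxc y hy, neg_zero, smul_zero]
  suffices Submodule.span ℂ {x} ≤ nilrad s from this (Submodule.mem_span_singleton_self x)
  refine le_sSup ⟨hspan, fun y hy z hz => ?_, 1, ?_⟩
  · rw [hlie y hy z hz]
    exact zero_mem _
  · refine le_bot_iff.mp (Submodule.span_le.mpr ?_)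
    rintro m ⟨y, hy, z, hz, rfl⟩
    rw [hlie y (hspan hy) z hz]
    exact zero_mem _

end LieAlgebra

lemma lie_eq_zero_of_mem_lieSpan {R L : Type*} [CommRing R] [LieRing L] [LieAlgebra R L]
    {S : Set L} {d y : L} (hS : ∀ z ∈ S, ⁅d, z⁆ = 0) (hy : y ∈ LieSubalgebra.lieSpan R L S) :
    ⁅d, y⁆ = 0 := by
  induction hy using LieSubalgebra.lieSpan_induction with
  | mem z hz => exact hS z hz
  | zero => exact lie_zero d
  | add _ _ _ _ hu hv => rw [lie_add, hu, hv, add_zero]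
  | smul t _ _ hu => rw [lie_smul, hu, smul_zero]
  | lie _ _ _ _ hu hv => rw [leibniz_lie, hu, hv, zero_lie, lie_zero, add_zero]

section Matrix

variable {N : ℕ}

lemma Emat_ne_zero (p q : Fin N) : Emat N p q ≠ 0 := by
  intro h
  simpa [Emat] using congrFun (congrFun h p) q

lemma lie_diagonal_Emat (f : Fin N → ℂ) (p q : Fin N) :
    ⁅Matrix.diagonal f, Emat N p q⁆ = (f p - f q) • Emat N p q := by
  ext i j
  rw [Ring.lie_def]
  simp only [Matrix.sub_apply, Matrix.smul_apply, Emat, Matrix.diagonal_mul, Matrix.mul_diagonal,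
    smul_eq_mul]
  by_cases h : p = i ∧ q = j
  · obtain ⟨rfl, rfl⟩ := h
    simp
  · rw [Matrix.single_apply_of_ne _ _ _ _ _ h]
    ring

lemma lie_Emat_self_apply (p : Fin N) (y : Matrix (Fin N) (Fin N) ℂ) (i j : Fin N) :
    ⁅Emat N p p, y⁆ i j = (if i = p then y p j else 0) - (if j = p then y i p else 0) := by
  rw [Ring.lie_def, Matrix.sub_apply]
  congr 1
  · by_cases h : i = p
    · subst h
      simp [Emat]
    · simp [Emat, Matrix.single_mul_apply_of_ne, h]
  · by_cases h : j = p
    · subst h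
      simp [Emat]
    · simp [Emat, Matrix.mul_single_apply_of_ne, h]

lemma diagonal_diag_eq_sub_sum_lie_Emat (x : Matrix (Fin N) (Fin N) ℂ) :
    Matrix.diagonal (fun i => x i i) =
      x - (2⁻¹ : ℂ) • ∑ p : Fin N, ⁅Emat N p p, ⁅Emat N p p, x⁆⁆ := by
  ext i j
  simp only [Matrix.sub_apply, Matrix.smul_apply, Matrix.sum_apply, lie_Emat_self_apply,
    smul_eq_mul, Matrix.diagonal_apply, Finset.sum_sub_distrib]
  by_cases h : i = j
  · subst h
    simp
  · simp [h, Ne.symm h]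
    ring

lemma diagonal_diag_mem {I : Submodule ℂ (Matrix (Fin N) (Fin N) ℂ)}
    (hI : ∀ p, ∀ z ∈ I, ⁅Emat N p p, z⁆ ∈ I) {x : Matrix (Fin N) (Fin N) ℂ} (hx : x ∈ I) :
    Matrix.diagonal (fun i => x i i) ∈ I := by
  rw [diagonal_diag_eq_sub_sum_lie_Emat]
  exact sub_mem hx (I.smul_mem _ (I.sum_mem fun p _ => hI p _ (hI p x hx)))

end Matrix

def seaweedEdge (a b : List ℕ) {N : ℕ} (p q : Fin N) : Prop :=
  ((q : ℕ) < p ∧ sameBlock a p q) ∨ ((p : ℕ) < q ∧ sameBlock b p q)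

section Seaweed

variable {a b : List ℕ} {N : ℕ}

lemma Emat_self_mem_seaweed (j : Fin N) : Emat N j j ∈ seaweed a b N :=
  LieSubalgebra.subset_lieSpan (Or.inl (Or.inl ⟨j, rfl⟩))

lemma Emat_mem_seaweed {p q : Fin N} (h : seaweedEdge a b p q) : Emat N p q ∈ seaweed a b N := by
  apply LieSubalgebra.subset_lieSpan
  rcases h with ⟨hlt, hblock⟩ | ⟨hlt, hblock⟩
  · exact Or.inl (Or.inr ⟨p, q, hlt, hblock, rfl⟩)
  · exact Or.inr ⟨p, q, hlt, hblock, rfl⟩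

lemma diagonal_mem_seaweed (f : Fin N → ℂ) : Matrix.diagonal f ∈ seaweed a b N := by
  rw [← Matrix.sum_single_eq_diagonal]
  refine (seaweed a b N).toSubmodule.sum_mem fun j _ => ?_
  simpa [Emat] using (seaweed a b N).smul_mem (f j) (Emat_self_mem_seaweed j)

lemma diag_eq_of_mem_nilpotent_ideal {I : Submodule ℂ (Matrix (Fin N) (Fin N) ℂ)}
    (hI : ∀ y ∈ seaweed a b N, ∀ z ∈ I, ⁅y, z⁆ ∈ I) {k : ℕ} (hk : lcsS I k = ⊥)
    {x : Matrix (Fin N) (Fin N) ℂ} (hx : x ∈ I) {p q : Fin N} (hpq : seaweedEdge a b p q) :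
    x p p = x q q := by
  by_contra hne
  set d := Matrix.diagonal (fun i => x i i)
  have hd : d ∈ I := diagonal_diag_mem (fun p => hI _ (Emat_self_mem_seaweed p)) hx
  have hc : x p p - x q q ≠ 0 := sub_ne_zero.mpr hne
  have hde : ⁅d, Emat N p q⁆ = (x p p - x q q) • Emat N p q := lie_diagonal_Emat _ p q
  have hE : Emat N p q ∈ I := by
    have h := I.smul_mem (-(x p p - x q q))⁻¹ (hI _ (Emat_mem_seaweed hpq) d hd)
    rwa [← lie_skew, hde, ← neg_smul, smul_smul, inv_mul_cancel₀ (neg_ne_zero.mpr hc),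
      one_smul] at h
  exact Emat_ne_zero p q (eq_zero_of_lie_eq_smul_of_lcsS_eq_bot hd hE hde hk hc)

lemma diag_eq_of_mem_nilrad {x : Matrix (Fin N) (Fin N) ℂ} (hx : x ∈ nilrad (seaweed a b N))
    {p q : Fin N} (hpq : seaweedEdge a b p q) : x p p = x q q := by
  have hle : nilrad (seaweed a b N) ≤
      LinearMap.ker (Matrix.entryLinearMap ℂ ℂ p p - Matrix.entryLinearMap ℂ ℂ q q) := by
    refine sSup_le ?_
    rintro I ⟨-, hI, k, hk⟩ y hy
    simpa [sub_eq_zero] using diag_eq_of_mem_nilpotent_ideal hI hk hy hpq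
  simpa [sub_eq_zero] using hle hx

lemma diagonal_mem_centerSub_seaweed {f : Fin N → ℂ}
    (hf : ∀ p q, seaweedEdge a b p q → f p = f q) :
    Matrix.diagonal f ∈ centerSub (seaweed a b N) := by
  refine ⟨diagonal_mem_seaweed f, fun y hy => lie_eq_zero_of_mem_lieSpan ?_ hy⟩
  rintro M ((⟨j, rfl⟩ | ⟨p, q, hlt, hblock, rfl⟩) | ⟨p, q, hlt, hblock, rfl⟩) <;>
    rw [lie_diagonal_Emat]
  · rw [sub_self, zero_smul]
  · rw [hf p q (Or.inl ⟨hlt, hblock⟩), sub_self, zero_smul]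
  · rw [hf p q (Or.inr ⟨hlt, hblock⟩), sub_self, zero_smul]

end Seaweed

theorem nilradical_diagonal_part_general (a b : List ℕ) (N : ℕ)
    (x : Matrix (Fin N) (Fin N) ℂ) (hx : x ∈ nilrad (seaweed a b N)) :
    Matrix.diagonal (fun i => x i i) ∈ nilrad (seaweed a b N) ∧
    Matrix.diagonal (fun i => x i i) ∈ centerSub (seaweed a b N) := by
  have hcenter := diagonal_mem_centerSub_seaweed fun _ _ => diag_eq_of_mem_nilrad hx
  exact ⟨mem_nilrad_of_mem_centerSub hcenter, hcenter⟩

/-- If `x` lies in the nilradical of a seaweed subalgebra `s` of `gl(N,ℂ)`, `N ≥ 2`, then the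
diagonal part of `x` also lies in the nilradical of `s`, and moreover lies in the center
`Z(s)`. -/
theorem nilradical_diagonal_part (a b : List ℕ) (N : ℕ) (hN : 2 ≤ N)
    (hsa : a.sum = N) (hsb : b.sum = N)
    (hpa : ∀ n ∈ a, 0 < n) (hpb : ∀ n ∈ b, 0 < n)
    (x : Matrix (Fin N) (Fin N) ℂ) (hx : x ∈ nilrad (seaweed a b N)) :
    Matrix.diagonal (fun i => x i i) ∈ nilrad (seaweed a b N) ∧
    Matrix.diagonal (fun i => x i i) ∈ centerSub (seaweed a b N) :=
  nilradical_diagonal_part_general a b N x hx
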